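/- Cut elimination for orthologic without axioms: a sequent is provable in the orthologic proof system (without non-logical axioms) if and only if it has a proof that contains no instance of the Cut rule. -/

import Mathlib

/-- Propositional formulas over a set `X` of variables. -/
inductive Formula (X : Type) : Type
  | var : X → Formula X
  | bot : Formula X
  | top : Formula X
  | and : Formula X → Formula X → Formula X
  | or : Formula X → Formula X → Formula X
  | not : Formula X → Formula X

/-- An ortholattice: a bounded lattice with a complement operation. -/
class Ortholattice (L : Type) extends Lattice L, BoundedOrder L where
  compl : L → L
  compl_compl : ∀ x : L, compl (compl x) = x
  compl_sup : ∀ x y : L, compl (x ⊔ y) = compl x ⊓ compl y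
  compl_inf : ∀ x y : L, compl (x ⊓ y) = compl x ⊔ compl y
  inf_compl : ∀ x : L, x ⊓ compl x = ⊥
  sup_compl : ∀ x : L, x ⊔ compl x = ⊤

/-- Homomorphic extension of a valuation `v : X → L` to formulas. -/
def Formula.eval {X L : Type} [Ortholattice L] (v : X → L) : Formula X → L
  | .var x => v x
  | .bot => ⊥
  | .top => ⊤
  | .and φ ψ => φ.eval v ⊓ ψ.eval v
  | .or φ ψ => φ.eval v ⊔ ψ.eval v
  | .not φ => Ortholattice.compl (φ.eval v)

/-- Annotated formulas: a formula marked as left (`L`) or right (`R`). -/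
inductive Ann (X : Type) : Type
  | L : Formula X → Ann X
  | R : Formula X → Ann X

/-- The underlying formula of an annotated formula. -/
def Ann.fml {X : Type} : Ann X → Formula X
  | .L φ => φ
  | .R φ => φ

/-- An orthologic sequent: an unordered pair of annotated formulas. -/
abbrev Sequent (X : Type) := Sym2 (Ann X)

/-- The orthologic proof system, with non-logical axioms `A`. -/
inductive OLProof {X : Type} (A : Set (Sequent X)) : Sequent X → Prop
  | ax {t : Sequent X} : t ∈ A → OLProof A t
  | hyp (φ : Formula X) : OLProof A s(Ann.L φ, Ann.R φ)
  | cut (Γ Δ : Ann X) (φ : Formula X) :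
      OLProof A s(Γ, Ann.R φ) → OLProof A s(Ann.L φ, Δ) → OLProof A s(Γ, Δ)
  | replace (Γ Δ : Ann X) : OLProof A s(Γ, Γ) → OLProof A s(Γ, Δ)
  | andL₁ (φ ψ : Formula X) (Δ : Ann X) :
      OLProof A s(Ann.L φ, Δ) → OLProof A s(Ann.L (φ.and ψ), Δ)
  | andL₂ (φ ψ : Formula X) (Δ : Ann X) :
      OLProof A s(Ann.L ψ, Δ) → OLProof A s(Ann.L (φ.and ψ), Δ)
  | andR (Γ : Ann X) (φ ψ : Formula X) :
      OLProof A s(Γ, Ann.R φ) → OLProof A s(Γ, Ann.R ψ) → OLProof A s(Γ, Ann.R (φ.and ψ))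
  | orL (φ ψ : Formula X) (Δ : Ann X) :
      OLProof A s(Ann.L φ, Δ) → OLProof A s(Ann.L ψ, Δ) → OLProof A s(Ann.L (φ.or ψ), Δ)
  | orR₁ (Γ : Ann X) (φ ψ : Formula X) :
      OLProof A s(Γ, Ann.R φ) → OLProof A s(Γ, Ann.R (φ.or ψ))
  | orR₂ (Γ : Ann X) (φ ψ : Formula X) :
      OLProof A s(Γ, Ann.R ψ) → OLProof A s(Γ, Ann.R (φ.or ψ))
  | negL (Γ : Ann X) (φ : Formula X) :
      OLProof A s(Γ, Ann.R φ) → OLProof A s(Γ, Ann.L φ.not)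
  | negR (φ : Formula X) (Δ : Ann X) :
      OLProof A s(Ann.L φ, Δ) → OLProof A s(Ann.R φ.not, Δ)
  | botL (Δ : Ann X) : OLProof A s(Ann.L Formula.bot, Δ)
  | topR (Γ : Ann X) : OLProof A s(Γ, Ann.R Formula.top)

/-- Satisfaction of an (ordered) pair of annotated formulas by a valuation. -/
def AnnSat {X L : Type} [Ortholattice L] (v : X → L) : Ann X → Ann X → Prop
  | .L φ, .R ψ => φ.eval v ≤ ψ.eval v
  | .R φ, .L ψ => ψ.eval v ≤ φ.eval v
  | .L φ, .L ψ => φ.eval v ⊓ ψ.eval v = ⊥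
  | .R φ, .R ψ => φ.eval v ⊔ ψ.eval v = ⊤

/-- A valuation satisfies a sequent. -/
def SeqSat {X L : Type} [Ortholattice L] (v : X → L) (t : Sequent X) : Prop :=
  ∀ a b : Ann X, t = s(a, b) → AnnSat v a b
/-- Boolean (classical) evaluation of a formula. -/
def Formula.evalB {X : Type} (v : X → Bool) : Formula X → Bool
  | .var x => v x
  | .bot => false
  | .top => true
  | .and φ ψ => φ.evalB v && ψ.evalB v
  | .or φ ψ => φ.evalB v || ψ.evalB v
  | .not φ => !(φ.evalB v)

/-- Size of a formula (number of nodes). -/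
def Formula.size {X : Type} : Formula X → Nat
  | .var _ => 1
  | .bot => 1
  | .top => 1
  | .and φ ψ => φ.size + ψ.size + 1
  | .or φ ψ => φ.size + ψ.size + 1
  | .not φ => φ.size + 1

/-- Negation normal form. -/
def Formula.nnf {X : Type} : Formula X → Formula X
  | .var x => .var x
  | .bot => .bot
  | .top => .top
  | .and φ ψ => .and φ.nnf ψ.nnf
  | .or φ ψ => .or φ.nnf ψ.nnf
  | .not (.var x) => .not (.var x)
  | .not .bot => .top
  | .not .top => .bot
  | .not (.and φ ψ) => .or φ.not.nnf ψ.not.nnf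
  | .not (.or φ ψ) => .and φ.not.nnf ψ.not.nnf
  | .not (.not φ) => φ.nnf
termination_by φ => φ.size
decreasing_by all_goals (simp [Formula.size] <;> omega)

/-- A formula is in NNF if negation occurs only directly on variables. -/
def Formula.IsNNF {X : Type} : Formula X → Prop
  | .var _ => True
  | .bot => True
  | .top => True
  | .and φ ψ => φ.IsNNF ∧ ψ.IsNNF
  | .or φ ψ => φ.IsNNF ∧ ψ.IsNNF
  | .not (.var _) => True
  | .not _ => False

/-- `getInverse φ = nnf (¬ φ)`. -/
def getInverse {X : Type} (φ : Formula X) : Formula X := φ.not.nnf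

/-- Orthologic equivalence of formulas (without non-logical axioms). -/
def OLEquiv {X : Type} (φ ψ : Formula X) : Prop :=
  OLProof (∅ : Set (Sequent X)) s(Ann.L φ, Ann.R ψ) ∧
  OLProof (∅ : Set (Sequent X)) s(Ann.L ψ, Ann.R φ)

/-- `Subformula γ φ` means `γ` is a subformula of `φ`. -/
inductive Subformula {X : Type} : Formula X → Formula X → Prop
  | refl (φ : Formula X) : Subformula φ φ
  | and_left {γ φ ψ : Formula X} : Subformula γ φ → Subformula γ (φ.and ψ)
  | and_right {γ φ ψ : Formula X} : Subformula γ ψ → Subformula γ (φ.and ψ)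
  | or_left {γ φ ψ : Formula X} : Subformula γ φ → Subformula γ (φ.or ψ)
  | or_right {γ φ ψ : Formula X} : Subformula γ ψ → Subformula γ (φ.or ψ)
  | not_sub {γ φ : Formula X} : Subformula γ φ → Subformula γ φ.not
/-- The orthologic proof system where every cut formula must satisfy `C`. -/
inductive OLProofCut {X : Type} (A : Set (Sequent X)) (C : Formula X → Prop) :
    Sequent X → Prop
  | ax {t : Sequent X} : t ∈ A → OLProofCut A C t
  | hyp (φ : Formula X) : OLProofCut A C s(Ann.L φ, Ann.R φ)
  | cut (Γ Δ : Ann X) (φ : Formula X) : C φ →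
      OLProofCut A C s(Γ, Ann.R φ) → OLProofCut A C s(Ann.L φ, Δ) → OLProofCut A C s(Γ, Δ)
  | replace (Γ Δ : Ann X) : OLProofCut A C s(Γ, Γ) → OLProofCut A C s(Γ, Δ)
  | andL₁ (φ ψ : Formula X) (Δ : Ann X) :
      OLProofCut A C s(Ann.L φ, Δ) → OLProofCut A C s(Ann.L (φ.and ψ), Δ)
  | andL₂ (φ ψ : Formula X) (Δ : Ann X) :
      OLProofCut A C s(Ann.L ψ, Δ) → OLProofCut A C s(Ann.L (φ.and ψ), Δ)
  | andR (Γ : Ann X) (φ ψ : Formula X) :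
      OLProofCut A C s(Γ, Ann.R φ) → OLProofCut A C s(Γ, Ann.R ψ) →
      OLProofCut A C s(Γ, Ann.R (φ.and ψ))
  | orL (φ ψ : Formula X) (Δ : Ann X) :
      OLProofCut A C s(Ann.L φ, Δ) → OLProofCut A C s(Ann.L ψ, Δ) →
      OLProofCut A C s(Ann.L (φ.or ψ), Δ)
  | orR₁ (Γ : Ann X) (φ ψ : Formula X) :
      OLProofCut A C s(Γ, Ann.R φ) → OLProofCut A C s(Γ, Ann.R (φ.or ψ))
  | orR₂ (Γ : Ann X) (φ ψ : Formula X) :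
      OLProofCut A C s(Γ, Ann.R ψ) → OLProofCut A C s(Γ, Ann.R (φ.or ψ))
  | negL (Γ : Ann X) (φ : Formula X) :
      OLProofCut A C s(Γ, Ann.R φ) → OLProofCut A C s(Γ, Ann.L φ.not)
  | negR (φ : Formula X) (Δ : Ann X) :
      OLProofCut A C s(Ann.L φ, Δ) → OLProofCut A C s(Ann.R φ.not, Δ)
  | botL (Δ : Ann X) : OLProofCut A C s(Ann.L Formula.bot, Δ)
  | topR (Γ : Ann X) : OLProofCut A C s(Γ, Ann.R Formula.top)

/-- The orthologic proof system where every sequent occurring in the proof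
(i.e. the conclusion of every rule instance) must lie in `S`. -/
inductive OLProofIn {X : Type} (A : Set (Sequent X)) (S : Set (Sequent X)) :
    Sequent X → Prop
  | ax {t : Sequent X} : t ∈ A → t ∈ S → OLProofIn A S t
  | hyp (φ : Formula X) : s(Ann.L φ, Ann.R φ) ∈ S → OLProofIn A S s(Ann.L φ, Ann.R φ)
  | cut (Γ Δ : Ann X) (φ : Formula X) : s(Γ, Δ) ∈ S →
      OLProofIn A S s(Γ, Ann.R φ) → OLProofIn A S s(Ann.L φ, Δ) → OLProofIn A S s(Γ, Δ)
  | replace (Γ Δ : Ann X) : s(Γ, Δ) ∈ S → OLProofIn A S s(Γ, Γ) → OLProofIn A S s(Γ, Δ)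
  | andL₁ (φ ψ : Formula X) (Δ : Ann X) : s(Ann.L (φ.and ψ), Δ) ∈ S →
      OLProofIn A S s(Ann.L φ, Δ) → OLProofIn A S s(Ann.L (φ.and ψ), Δ)
  | andL₂ (φ ψ : Formula X) (Δ : Ann X) : s(Ann.L (φ.and ψ), Δ) ∈ S →
      OLProofIn A S s(Ann.L ψ, Δ) → OLProofIn A S s(Ann.L (φ.and ψ), Δ)
  | andR (Γ : Ann X) (φ ψ : Formula X) : s(Γ, Ann.R (φ.and ψ)) ∈ S →
      OLProofIn A S s(Γ, Ann.R φ) → OLProofIn A S s(Γ, Ann.R ψ) →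
      OLProofIn A S s(Γ, Ann.R (φ.and ψ))
  | orL (φ ψ : Formula X) (Δ : Ann X) : s(Ann.L (φ.or ψ), Δ) ∈ S →
      OLProofIn A S s(Ann.L φ, Δ) → OLProofIn A S s(Ann.L ψ, Δ) →
      OLProofIn A S s(Ann.L (φ.or ψ), Δ)
  | orR₁ (Γ : Ann X) (φ ψ : Formula X) : s(Γ, Ann.R (φ.or ψ)) ∈ S →
      OLProofIn A S s(Γ, Ann.R φ) → OLProofIn A S s(Γ, Ann.R (φ.or ψ))
  | orR₂ (Γ : Ann X) (φ ψ : Formula X) : s(Γ, Ann.R (φ.or ψ)) ∈ S →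
      OLProofIn A S s(Γ, Ann.R ψ) → OLProofIn A S s(Γ, Ann.R (φ.or ψ))
  | negL (Γ : Ann X) (φ : Formula X) : s(Γ, Ann.L φ.not) ∈ S →
      OLProofIn A S s(Γ, Ann.R φ) → OLProofIn A S s(Γ, Ann.L φ.not)
  | negR (φ : Formula X) (Δ : Ann X) : s(Ann.R φ.not, Δ) ∈ S →
      OLProofIn A S s(Ann.L φ, Δ) → OLProofIn A S s(Ann.R φ.not, Δ)
  | botL (Δ : Ann X) : s(Ann.L Formula.bot, Δ) ∈ S → OLProofIn A S s(Ann.L Formula.bot, Δ)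
  | topR (Γ : Ann X) : s(Γ, Ann.R Formula.top) ∈ S → OLProofIn A S s(Γ, Ann.R Formula.top)

/-!
Cut elimination is proved semantically. Orthologic is sound for ortholattices when `φ^L` is read
as `⟦φ⟧`, `φ^R` as `⟦φ⟧ᗮ`, and a sequent `(a, b)` as `⟦a⟧ ≤ ⟦b⟧ᗮ`. Conversely, call two
annotated formulas orthogonal when the sequent they form has a cut-free proof. This relation is
symmetric, and by the Replace rule a self-orthogonal formula is orthogonal to everything, so the
formal concepts of the relation form an ortholattice, with complement exchanging extent and intent.
In it each formula `χ` evaluates to a concept with `χ^L` in its extent and `χ^R` in its intent,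
so a sequent that holds there is cut-free provable.
-/

section ConceptOrtholattice

open Concept

theorem Concept.mem_extent_iff {α β : Type} {r : α → β → Prop} {c : Concept α β r} {a : α} :
    a ∈ c.extent ↔ ∀ b ∈ c.intent, r a b := by
  rw [← c.lowerPolar_intent]
  rfl

theorem Concept.mem_intent_iff {α β : Type} {r : α → β → Prop} {c : Concept α β r} {b : β} :
    b ∈ c.intent ↔ ∀ a ∈ c.extent, r a b := by
  rw [← c.upperPolar_extent]
  rfl

variable {α : Type} {r : α → α → Prop} [Std.Symm r]

theorem upperPolar_eq_lowerPolar_of_symm (s : Set α) : upperPolar r s = lowerPolar r s := by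
  rw [← lowerPolar_swap, Std.Symm.swap_eq]

def Concept.orth (c : Concept α α r) : Concept α α r where
  extent := c.intent
  intent := c.extent
  upperPolar_extent := by rw [upperPolar_eq_lowerPolar_of_symm, c.lowerPolar_intent]
  lowerPolar_intent := by rw [← upperPolar_eq_lowerPolar_of_symm, c.upperPolar_extent]

abbrev Concept.ortholattice (hself : ∀ a b, r a a → r a b) : Ortholattice (Concept α α r) where
  compl := Concept.orth
  compl_compl _ := rfl
  compl_sup _ _ := Concept.ext rfl
  compl_inf _ _ := Concept.ext' rfl
  inf_compl _ := eq_bot_iff.2 fun a ⟨ha, ha'⟩ b _ => hself a b (rel_extent_intent ha ha')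
  sup_compl _ := eq_top_iff.2 <| intent_subset_intent_iff.1 fun b ⟨hb, hb'⟩ a _ =>
    symm (hself b a (rel_extent_intent hb' hb))

end ConceptOrtholattice

section Soundness

variable {L : Type} [Ortholattice L]

local postfix:max "′" => Ortholattice.compl

namespace Ortholattice

theorem compl_anti {a b : L} (h : a ≤ b) : b′ ≤ a′ := by
  rw [← sup_eq_right.2 h, compl_sup]
  exact inf_le_left

theorem le_compl_comm {a b : L} : a ≤ b′ ↔ b ≤ a′ :=
  ⟨fun h => compl_compl b ▸ compl_anti h, fun h => compl_compl a ▸ compl_anti h⟩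

theorem eq_bot_of_le_compl_self {a : L} (h : a ≤ a′) : a = ⊥ := by
  rw [← inf_compl a, inf_eq_left.2 h]

end Ortholattice

variable {X : Type} (v : X → L)

def Ann.eval : Ann X → L
  | .L φ => φ.eval v
  | .R φ => (φ.eval v)′

def Sequent.Holds : Sequent X → Prop :=
  Sym2.lift ⟨fun a b => a.eval v ≤ (b.eval v)′, fun _ _ => propext Ortholattice.le_compl_comm⟩

theorem Sequent.holds_mk (a b : Ann X) : Sequent.Holds v s(a, b) ↔ a.eval v ≤ (b.eval v)′ :=
  Iff.rfl

theorem Sequent.holds_mk_R (a : Ann X) (φ : Formula X) :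
    Sequent.Holds v s(a, .R φ) ↔ a.eval v ≤ φ.eval v := by
  rw [holds_mk, Ann.eval, Ortholattice.compl_compl]

theorem OLProof.holds {A : Set (Sequent X)} (hA : ∀ s ∈ A, Sequent.Holds v s) {t : Sequent X}
    (h : OLProof A t) : Sequent.Holds v t := by
  induction h with
  | ax ht => exact hA _ ht
  | hyp φ => exact (Sequent.holds_mk_R v _ φ).2 le_rfl
  | cut Γ Δ φ _ _ ih₁ ih₂ => exact ((Sequent.holds_mk_R v Γ φ).1 ih₁).trans ih₂
  | replace Γ Δ _ ih =>
    rw [Sequent.holds_mk, Ortholattice.eq_bot_of_le_compl_self ih]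
    exact bot_le
  | andL₁ φ ψ Δ _ ih => exact inf_le_left.trans ih
  | andL₂ φ ψ Δ _ ih => exact inf_le_right.trans ih
  | andR Γ φ ψ _ _ ih₁ ih₂ =>
    rw [Sequent.holds_mk_R] at ih₁ ih₂ ⊢
    exact le_inf ih₁ ih₂
  | orL φ ψ Δ _ _ ih₁ ih₂ => exact sup_le ih₁ ih₂
  | orR₁ Γ φ ψ _ ih =>
    rw [Sequent.holds_mk_R] at ih ⊢
    exact ih.trans le_sup_left
  | orR₂ Γ φ ψ _ ih =>
    rw [Sequent.holds_mk_R] at ih ⊢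
    exact ih.trans le_sup_right
  | negL Γ φ _ ih => exact ih
  | negR φ Δ _ ih => exact (Ortholattice.compl_compl _).trans_le ih
  | botL Δ => exact bot_le
  | topR Γ => exact (Sequent.holds_mk_R v _ _).2 le_top

end Soundness

theorem OLProofCut.toOLProof {X : Type} {A : Set (Sequent X)} {C : Formula X → Prop}
    {t : Sequent X} (h : OLProofCut A C t) : OLProof A t := by
  induction h with
  | ax h => exact .ax h
  | hyp φ => exact .hyp φ
  | cut Γ Δ φ _ _ _ ih₁ ih₂ => exact .cut Γ Δ φ ih₁ ih₂
  | replace Γ Δ _ ih => exact .replace Γ Δ ih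
  | andL₁ φ ψ Δ _ ih => exact .andL₁ φ ψ Δ ih
  | andL₂ φ ψ Δ _ ih => exact .andL₂ φ ψ Δ ih
  | andR Γ φ ψ _ _ ih₁ ih₂ => exact .andR Γ φ ψ ih₁ ih₂
  | orL φ ψ Δ _ _ ih₁ ih₂ => exact .orL φ ψ Δ ih₁ ih₂
  | orR₁ Γ φ ψ _ ih => exact .orR₁ Γ φ ψ ih
  | orR₂ Γ φ ψ _ ih => exact .orR₂ Γ φ ψ ih
  | negL Γ φ _ ih => exact .negL Γ φ ih
  | negR φ Δ _ ih => exact .negR φ Δ ih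
  | botL Δ => exact .botL Δ
  | topR Γ => exact .topR Γ

section CanonicalModel

open Concept

variable {X : Type}

def CutFreeOrth (a b : Ann X) : Prop := OLProofCut (∅ : Set (Sequent X)) (fun _ => False) s(a, b)

instance : Std.Symm (@CutFreeOrth X) := ⟨fun a b h => by rwa [CutFreeOrth, Sym2.eq_swap]⟩

instance : Ortholattice (Concept (Ann X) (Ann X) CutFreeOrth) :=
  Concept.ortholattice OLProofCut.replace

def canonicalValuation (x : X) : Concept (Ann X) (Ann X) CutFreeOrth :=
  ofObject CutFreeOrth (.L (.var x))

theorem mem_eval_canonicalValuation (χ : Formula X) :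
    Ann.L χ ∈ (χ.eval canonicalValuation).extent ∧
      Ann.R χ ∈ (χ.eval canonicalValuation).intent := by
  induction χ with
  | var x =>
    exact ⟨subset_lowerPolar_upperPolar _ _ rfl, (mem_upperPolar_singleton _).2 (.hyp _)⟩
  | bot => exact ⟨mem_extent_iff.2 fun b _ => .botL b, Set.mem_univ _⟩
  | top => exact ⟨Set.mem_univ _, mem_intent_iff.2 fun a _ => .topR a⟩
  | and φ ψ ihφ ihψ =>
    refine ⟨⟨?_, ?_⟩, mem_intent_iff.2 fun a ⟨ha₁, ha₂⟩ => ?_⟩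
    · exact mem_extent_iff.2 fun b hb => .andL₁ φ ψ b (rel_extent_intent ihφ.1 hb :)
    · exact mem_extent_iff.2 fun b hb => .andL₂ φ ψ b (rel_extent_intent ihψ.1 hb :)
    · exact .andR a φ ψ (rel_extent_intent ha₁ ihφ.2 :) (rel_extent_intent ha₂ ihψ.2 :)
  | or φ ψ ihφ ihψ =>
    refine ⟨mem_extent_iff.2 fun b ⟨hb₁, hb₂⟩ => ?_, ⟨?_, ?_⟩⟩
    · exact .orL φ ψ b (rel_extent_intent ihφ.1 hb₁ :) (rel_extent_intent ihψ.1 hb₂ :)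
    · exact mem_intent_iff.2 fun a ha => .orR₁ a φ ψ (rel_extent_intent ha ihφ.2 :)
    · exact mem_intent_iff.2 fun a ha => .orR₂ a φ ψ (rel_extent_intent ha ihψ.2 :)
  | not φ ihφ =>
    exact ⟨mem_intent_iff.2 fun a ha => .negL a φ (rel_extent_intent ha ihφ.2 :),
      mem_extent_iff.2 fun b hb => .negR φ b (rel_extent_intent ihφ.1 hb :)⟩

theorem mem_extent_eval_canonicalValuation : ∀ a : Ann X, a ∈ (a.eval canonicalValuation).extent
  | .L χ => (mem_eval_canonicalValuation χ).1
  | .R χ => (mem_eval_canonicalValuation χ).2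

theorem cutFreeOrth_of_olProof {a b : Ann X} (h : OLProof (∅ : Set (Sequent X)) s(a, b)) :
    CutFreeOrth a b :=
  have hab : a.eval canonicalValuation ≤ Ortholattice.compl (b.eval canonicalValuation) :=
    h.holds canonicalValuation (by simp)
  symm (rel_extent_intent (mem_extent_eval_canonicalValuation b)
    (hab (mem_extent_eval_canonicalValuation a)))

end CanonicalModel

theorem ol_cut_elimination_general {X : Type} (t : Sequent X) :
    OLProof (∅ : Set (Sequent X)) t ↔
      OLProofCut (∅ : Set (Sequent X)) (fun _ => False) t := by
  induction t using Sym2.ind with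
  | _ a b => exact ⟨cutFreeOrth_of_olProof, OLProofCut.toOLProof⟩

/-- Cut elimination for orthologic without axioms: a sequent is
provable iff it has a proof without any instance of the Cut rule. -/
theorem ol_cut_elimination {X : Type} [Countable X] [Infinite X] (t : Sequent X) :
    OLProof (∅ : Set (Sequent X)) t ↔
      OLProofCut (∅ : Set (Sequent X)) (fun _ => False) t :=
  ol_cut_elimination_general t
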